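/- Let d ≥ 1 and σ > 0. Suppose c₁, c₂ : ℕ^d → ℂ satisfy: for each j ∈ {1,2} and every r > 0 there is C > 0 with |c_j(α)| ≤ C r^{|α|} (α!)^{1/(2σ)} for all α ∈ ℕ^d. Define c(α) = Σ_{γ ≤ α} C(α,γ)^{1/2} c₁(γ) c₂(α−γ). Then for every r > 0 there is C' > 0 with |c(α)| ≤ C' r^{|α|} (α!)^{1/(2σ)} for all α ∈ ℕ^d. (This says that the space 𝒜_{♭_σ}'(ℂ^d) of power series Σ c(α) z^α/√(α!) is closed under pointwise multiplication.) -/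

import Mathlib

open Finset

noncomputable section

/-- Size of a multi-index: `|α| = α₁ + ⋯ + α_d`. -/
def msize {d : ℕ} (α : Fin d → ℕ) : ℕ := ∑ i, α i

/-- Factorial of a multi-index: `α! = ∏ᵢ αᵢ!`. -/
def mfact {d : ℕ} (α : Fin d → ℕ) : ℕ := ∏ i, Nat.factorial (α i)

/-- Binomial coefficient of multi-indices: `C(α,γ) = ∏ᵢ choose(αᵢ,γᵢ)`. -/
def mchoose {d : ℕ} (α γ : Fin d → ℕ) : ℕ := ∏ i, Nat.choose (α i) (γ i)

/-- Coefficients of the product of two power series `Σ c_j(α) z^α/√(α!)`: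
`c(α) = Σ_{γ ≤ α} C(α,γ)^{1/2} c₁(γ) c₂(α−γ)`. -/
def prodCoeff {d : ℕ} (c₁ c₂ : (Fin d → ℕ) → ℂ) : (Fin d → ℕ) → ℂ := fun α =>
  ∑ γ ∈ Finset.Iic α,
    ((Real.sqrt ((mchoose α γ : ℕ)) : ℝ) : ℂ) * c₁ γ * c₂ (α - γ)

/- Proof idea: every one of the at most `2^|α|` terms of `c(α)` has binomial factor
`C(α,γ)^{1/2} ≤ 2^|α|`, while `|γ| + |α - γ| = |α|` and `γ! (α - γ)! ≤ α!`. Hence bounds with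
radius `r/4` for `c₁` and `c₂` give a bound with radius `r` for `c`. -/

namespace MultiIndex

variable {d : ℕ}

lemma mchoose_le_two_pow_msize (α γ : Fin d → ℕ) : mchoose α γ ≤ 2 ^ msize α := by
  rw [mchoose, msize, ← prod_pow_eq_pow_sum]
  exact prod_le_prod' fun i _ => Nat.choose_le_two_pow _ _

lemma sqrt_mchoose_le_two_pow_msize (α γ : Fin d → ℕ) :
    √(mchoose α γ : ℝ) ≤ 2 ^ msize α := by
  rw [Real.sqrt_le_left (by positivity), ← pow_mul, mul_comm, pow_mul]
  calc (mchoose α γ : ℝ) ≤ 2 ^ msize α := mod_cast mchoose_le_two_pow_msize α γ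
    _ ≤ (2 ^ 2) ^ msize α := pow_le_pow_left₀ (by norm_num) (by norm_num) _

lemma card_Iic_le_two_pow_msize (α : Fin d → ℕ) : #(Iic α) ≤ 2 ^ msize α := by
  rw [Pi.card_Iic, msize, ← prod_pow_eq_pow_sum]
  exact prod_le_prod' fun i _ => by rw [Nat.card_Iic]; exact Nat.lt_two_pow_self

lemma msize_add_msize_sub {α γ : Fin d → ℕ} (h : γ ≤ α) :
    msize γ + msize (α - γ) = msize α := by
  rw [msize, msize, msize, ← sum_add_distrib]
  exact sum_congr rfl fun i _ => Nat.add_sub_of_le (h i)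

lemma mfact_mul_mfact_sub_le {α γ : Fin d → ℕ} (h : γ ≤ α) :
    mfact γ * mfact (α - γ) ≤ mfact α := by
  rw [mfact, mfact, mfact, ← prod_mul_distrib]
  exact prod_le_prod' fun i _ =>
    Nat.le_of_dvd (Nat.factorial_pos _) (Nat.factorial_mul_factorial_dvd_factorial (h i))

end MultiIndex

open MultiIndex

def coeffWeight {d : ℕ} (ρ s : ℝ) (α : Fin d → ℕ) : ℝ := ρ ^ msize α * (mfact α : ℝ) ^ s

section coeffWeight

variable {d : ℕ} {ρ s : ℝ}

lemma coeffWeight_nonneg (hρ : 0 ≤ ρ) (α : Fin d → ℕ) : 0 ≤ coeffWeight ρ s α := by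
  unfold coeffWeight; positivity

@[simp]
lemma coeffWeight_zero : coeffWeight ρ s (0 : Fin d → ℕ) = 1 := by
  simp [coeffWeight, msize, mfact]

lemma coeffWeight_mul_radius (a : ℝ) (α : Fin d → ℕ) :
    coeffWeight (a * ρ) s α = a ^ msize α * coeffWeight ρ s α := by
  rw [coeffWeight, coeffWeight, mul_pow, mul_assoc]

lemma coeffWeight_mul_coeffWeight_sub_le (hρ : 0 ≤ ρ) (hs : 0 ≤ s) {α γ : Fin d → ℕ}
    (h : γ ≤ α) :
    coeffWeight ρ s γ * coeffWeight ρ s (α - γ) ≤ coeffWeight ρ s α := by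
  have hfact : (mfact γ : ℝ) ^ s * (mfact (α - γ) : ℝ) ^ s ≤ (mfact α : ℝ) ^ s := by
    rw [← Real.mul_rpow (by positivity) (by positivity)]
    exact Real.rpow_le_rpow (by positivity) (mod_cast mfact_mul_mfact_sub_le h) hs
  calc coeffWeight ρ s γ * coeffWeight ρ s (α - γ)
      = ρ ^ msize α * ((mfact γ : ℝ) ^ s * (mfact (α - γ) : ℝ) ^ s) := by
        rw [coeffWeight, coeffWeight, ← msize_add_msize_sub h, pow_add]; ring
    _ ≤ coeffWeight ρ s α := mul_le_mul_of_nonneg_left hfact (by positivity)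

end coeffWeight

lemma nonneg_of_forall_norm_le_mul_coeffWeight {d : ℕ} {c : (Fin d → ℕ) → ℂ} {C ρ s : ℝ}
    (hc : ∀ α, ‖c α‖ ≤ C * coeffWeight ρ s α) : 0 ≤ C := by
  simpa using (norm_nonneg _).trans (hc 0)

section prodCoeff

variable {d : ℕ} {c₁ c₂ : (Fin d → ℕ) → ℂ} {C₁ C₂ ρ s : ℝ}

lemma norm_prodCoeff_term_le (hρ : 0 ≤ ρ) (hs : 0 ≤ s)
    (hc₁ : ∀ α, ‖c₁ α‖ ≤ C₁ * coeffWeight ρ s α) (hc₂ : ∀ α, ‖c₂ α‖ ≤ C₂ * coeffWeight ρ s α)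
    {α γ : Fin d → ℕ} (h : γ ≤ α) :
    ‖(√(mchoose α γ : ℝ) : ℂ) * c₁ γ * c₂ (α - γ)‖ ≤
      2 ^ msize α * (C₁ * C₂ * coeffWeight ρ s α) := by
  have hC₁ := nonneg_of_forall_norm_le_mul_coeffWeight hc₁
  have hC₂ := nonneg_of_forall_norm_le_mul_coeffWeight hc₂
  rw [norm_mul, norm_mul, Complex.norm_real, Real.norm_of_nonneg (Real.sqrt_nonneg _)]
  calc √(mchoose α γ : ℝ) * ‖c₁ γ‖ * ‖c₂ (α - γ)‖
      ≤ 2 ^ msize α * (C₁ * coeffWeight ρ s γ) * (C₂ * coeffWeight ρ s (α - γ)) := by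
        have hw₁ := (norm_nonneg _).trans (hc₁ γ)
        gcongr
        · exact sqrt_mchoose_le_two_pow_msize α γ
        · exact hc₁ γ
        · exact hc₂ (α - γ)
    _ = 2 ^ msize α * (C₁ * C₂ * (coeffWeight ρ s γ * coeffWeight ρ s (α - γ))) := by ring
    _ ≤ 2 ^ msize α * (C₁ * C₂ * coeffWeight ρ s α) := by
        gcongr
        exact coeffWeight_mul_coeffWeight_sub_le hρ hs h

theorem norm_prodCoeff_le (hρ : 0 ≤ ρ) (hs : 0 ≤ s)
    (hc₁ : ∀ α, ‖c₁ α‖ ≤ C₁ * coeffWeight ρ s α) (hc₂ : ∀ α, ‖c₂ α‖ ≤ C₂ * coeffWeight ρ s α)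
    (α : Fin d → ℕ) :
    ‖prodCoeff c₁ c₂ α‖ ≤ C₁ * C₂ * coeffWeight (4 * ρ) s α := by
  have hB : 0 ≤ C₁ * C₂ * coeffWeight ρ s α :=
    mul_nonneg (mul_nonneg (nonneg_of_forall_norm_le_mul_coeffWeight hc₁)
      (nonneg_of_forall_norm_le_mul_coeffWeight hc₂)) (coeffWeight_nonneg hρ α)
  calc ‖prodCoeff c₁ c₂ α‖
      ≤ #(Iic α) • (2 ^ msize α * (C₁ * C₂ * coeffWeight ρ s α)) :=
        (norm_sum_le _ _).trans <| sum_le_card_nsmul _ _ _ fun γ hγ =>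
          norm_prodCoeff_term_le hρ hs hc₁ hc₂ (mem_Iic.mp hγ)
    _ ≤ 2 ^ msize α * (2 ^ msize α * (C₁ * C₂ * coeffWeight ρ s α)) := by
        rw [nsmul_eq_mul]
        gcongr
        exact_mod_cast card_Iic_le_two_pow_msize α
    _ = C₁ * C₂ * coeffWeight (4 * ρ) s α := by
        rw [coeffWeight_mul_radius, show (4 : ℝ) = 2 * 2 by norm_num, mul_pow]; ring

end prodCoeff

theorem stmt_18_general (d : ℕ) (σ : ℝ) (hσ : 0 < σ)
    (c₁ c₂ : (Fin d → ℕ) → ℂ)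
    (h₁ : ∀ r > (0:ℝ), ∃ C > (0:ℝ), ∀ α : Fin d → ℕ,
      ‖c₁ α‖ ≤ C * (r ^ (msize α) * (mfact α : ℝ) ^ ((1:ℝ)/(2*σ))))
    (h₂ : ∀ r > (0:ℝ), ∃ C > (0:ℝ), ∀ α : Fin d → ℕ,
      ‖c₂ α‖ ≤ C * (r ^ (msize α) * (mfact α : ℝ) ^ ((1:ℝ)/(2*σ)))) :
    ∀ r > (0:ℝ), ∃ C' > (0:ℝ), ∀ α : Fin d → ℕ,
      ‖prodCoeff c₁ c₂ α‖ ≤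
        C' * (r ^ (msize α) * (mfact α : ℝ) ^ ((1:ℝ)/(2*σ))) := by
  intro r hr
  obtain ⟨C₁, hC₁, H₁⟩ := h₁ (r / 4) (by positivity)
  obtain ⟨C₂, hC₂, H₂⟩ := h₂ (r / 4) (by positivity)
  refine ⟨C₁ * C₂, mul_pos hC₁ hC₂, fun α => ?_⟩
  have := norm_prodCoeff_le (by positivity) (by positivity) H₁ H₂ α
  rwa [mul_div_cancel₀ r four_ne_zero] at this

/-- the space `𝒜_{♭_σ}'(ℂ^d)`, described by coefficient bounds
`|c(α)| ≤ C r^{|α|}(α!)^{1/(2σ)}` for every `r > 0`, is closed under the product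
of power series. -/
theorem stmt_18 (d : ℕ) (hd : 1 ≤ d) (σ : ℝ) (hσ : 0 < σ)
    (c₁ c₂ : (Fin d → ℕ) → ℂ)
    (h₁ : ∀ r > (0:ℝ), ∃ C > (0:ℝ), ∀ α : Fin d → ℕ,
      ‖c₁ α‖ ≤ C * (r ^ (msize α) * (mfact α : ℝ) ^ ((1:ℝ)/(2*σ))))
    (h₂ : ∀ r > (0:ℝ), ∃ C > (0:ℝ), ∀ α : Fin d → ℕ,
      ‖c₂ α‖ ≤ C * (r ^ (msize α) * (mfact α : ℝ) ^ ((1:ℝ)/(2*σ)))) :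
    ∀ r > (0:ℝ), ∃ C' > (0:ℝ), ∀ α : Fin d → ℕ,
      ‖prodCoeff c₁ c₂ α‖ ≤
        C' * (r ^ (msize α) * (mfact α : ℝ) ^ ((1:ℝ)/(2*σ))) :=
  stmt_18_general d σ hσ c₁ c₂ h₁ h₂

end
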